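/- arXiv:1610.05952 — 3 statements merged into one kernel-verified Lean document; each statement's English description precedes it below -/
import Mathlib

section
/- Let $w \in A_\infty$ on $\mathbb{R}^n$. Then $v = w^{-1} \in A_p(w)$ if and only if $w \in RH_{p'}$, where $1 < p < \infty$ and $p'$ is the conjugate exponent of $p$. -/
/-!
For `v = w⁻¹` the two weighted measures in the `A_p(w)` condition are `v dw = dx` and
`v^{1-p'} dw = w^{p'} dx`, so on a ball `B` the `A_p(w)` quantity of `v` is
`|B| (∫_B w^{p'})^{p-1} / w(B)^p`. Raising the `RH_{p'}` inequality with constant `C` to the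
power `p` says exactly that this quantity is at most `C^p`.
-/

open MeasureTheory Metric ENNReal NNReal Set

noncomputable section

/-- `w ∈ A_q` with constant at most `C` (for `1 ≤ q < ∞`), with respect to Lebesgue measure. -/
def apBound (n : ℕ) (w : EuclideanSpace ℝ (Fin n) → ℝ≥0∞) (q : ℝ) (C : ℝ≥0∞) : Prop :=
  ∀ (c : EuclideanSpace ℝ (Fin n)) (r : ℝ), 0 < r →
    (if q = 1 then
      ((∫⁻ x in ball c r, w x) / volume (ball c r)) *
        essSup (fun x => (w x)⁻¹) (volume.restrict (ball c r))
    else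
      ((∫⁻ x in ball c r, w x) / volume (ball c r)) *
        (((∫⁻ x in ball c r, (w x) ^ (-(1/(q-1)))) / volume (ball c r)) ^ (q - 1))) ≤ C

theorem setLIntegral_inv_mul_self {α : Type*} [MeasurableSpace α] {μ : Measure α}
    {w : α → ℝ≥0∞} (hw : ∀ᵐ x ∂μ, 0 < w x ∧ w x ≠ ∞) (s : Set α) :
    ∫⁻ x in s, (w x)⁻¹ * w x ∂μ = μ s := by
  have h_one : (fun x => (w x)⁻¹ * w x) =ᵐ[μ.restrict s] fun _ => 1 :=
    ae_restrict_of_ae (hw.mono fun x hx => ENNReal.inv_mul_cancel hx.1.ne' hx.2)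
  rw [lintegral_congr_ae h_one, setLIntegral_one]

theorem inv_rpow_neg_mul_self (a : ℝ≥0∞) {s : ℝ} (hs : 0 ≤ s) :
    a⁻¹ ^ (-s) * a = a ^ (s + 1) := by
  rw [ENNReal.inv_rpow, ENNReal.rpow_neg, inv_inv, rpow_add_of_nonneg _ _ hs zero_le_one,
    ENNReal.rpow_one]

theorem div_mul_div_rpow_sub_one {x y t : ℝ≥0∞} {q : ℝ} (hq : 1 ≤ q) (ht : t ≠ ∞) :
    x / t * (y / t) ^ (q - 1) = x * y ^ (q - 1) / t ^ q := by
  have hq₁ : 0 ≤ q - 1 := sub_nonneg.2 hq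
  have ht_pow : t * t ^ (q - 1) = t ^ q := by
    calc t * t ^ (q - 1) = t ^ (1 + (q - 1)) := by
          rw [rpow_add_of_nonneg _ _ zero_le_one hq₁, ENNReal.rpow_one]
      _ = t ^ q := by rw [add_sub_cancel]
  rw [ENNReal.div_rpow_of_nonneg _ _ hq₁, ← ht_pow, div_eq_mul_inv, div_eq_mul_inv, div_eq_mul_inv,
    ENNReal.mul_inv (Or.inr (ENNReal.rpow_ne_top_of_nonneg hq₁ ht)) (Or.inl ht)]
  ring

theorem div_le_div_iff_of_ne_zero_of_ne_top {x y t : ℝ≥0∞} (ht₀ : t ≠ 0) (ht : t ≠ ∞) :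
    x / t ≤ y / t ↔ x ≤ y := by
  rw [ENNReal.div_le_iff ht₀ ht, ENNReal.div_mul_cancel ht₀ ht]

theorem div_mul_div_rpow_sub_one_le_iff {V W A C : ℝ≥0∞} {p : ℝ} (hp : 1 ≤ p) (hW₀ : W ≠ 0)
    (hW : W ≠ ∞) : V / W * (A / W) ^ (p - 1) ≤ C ↔ V * A ^ (p - 1) ≤ C * W ^ p := by
  rw [div_mul_div_rpow_sub_one hp hW,
    ENNReal.div_le_iff (ENNReal.rpow_pos (pos_iff_ne_zero.2 hW₀) hW).ne'
      (ENNReal.rpow_ne_top_of_nonneg (zero_le_one.trans hp) hW)]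

theorem div_rpow_le_mul_div_iff {V W A C : ℝ≥0∞} {p : ℝ} (hp : 1 ≤ p) (hV₀ : V ≠ 0)
    (hV : V ≠ ∞) : (A / V) ^ ((p - 1) / p) ≤ C * (W / V) ↔ V * A ^ (p - 1) ≤ C ^ p * W ^ p := by
  have hp₀ : 0 < p := zero_lt_one.trans_le hp
  have hVp₀ : V ^ p ≠ 0 := (ENNReal.rpow_pos (pos_iff_ne_zero.2 hV₀) hV).ne'
  have hVp : V ^ p ≠ ∞ := ENNReal.rpow_ne_top_of_nonneg hp₀.le hV
  have h_lhs : ((A / V) ^ ((p - 1) / p)) ^ p = V * A ^ (p - 1) / V ^ p := by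
    rw [← ENNReal.rpow_mul, div_mul_cancel₀ _ hp₀.ne', ← div_mul_div_rpow_sub_one hp hV,
      ENNReal.div_self hV₀ hV, one_mul]
  have h_rhs : (C * (W / V)) ^ p = C ^ p * W ^ p / V ^ p := by
    rw [ENNReal.mul_rpow_of_nonneg _ _ hp₀.le, ENNReal.div_rpow_of_nonneg _ _ hp₀.le, mul_div_assoc]
  rw [← ENNReal.rpow_le_rpow_iff hp₀, h_lhs, h_rhs, div_le_div_iff_of_ne_zero_of_ne_top hVp₀ hVp]

theorem exists_nnreal_rpow_iff {p : ℝ} (hp : 0 < p) {P : ℝ≥0∞ → Prop} :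
    (∃ C : ℝ≥0, P ((C : ℝ≥0∞) ^ p)) ↔ ∃ C : ℝ≥0, P C := by
  constructor
  · rintro ⟨C, hC⟩
    exact ⟨C ^ p, by rwa [ENNReal.coe_rpow_of_nonneg _ hp.le]⟩
  · rintro ⟨C, hC⟩
    refine ⟨C ^ p⁻¹, ?_⟩
    rwa [← ENNReal.coe_rpow_of_nonneg _ hp.le, ← NNReal.rpow_mul, inv_mul_cancel₀ hp.ne',
      NNReal.rpow_one]

theorem dual_Ap_iff_RH_general
    (n : ℕ) (w : EuclideanSpace ℝ (Fin n) → ℝ≥0∞) (p : ℝ) (hp : 1 < p)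
    (hpos : ∀ᵐ x ∂(volume : Measure (EuclideanSpace ℝ (Fin n))), 0 < w x ∧ w x ≠ ∞)
    (hloc : ∀ (c : EuclideanSpace ℝ (Fin n)) (r : ℝ), 0 < r →
      0 < (∫⁻ x in ball c r, w x) ∧ (∫⁻ x in ball c r, w x) ≠ ∞) :
    (∃ C : ℝ≥0, ∀ (c : EuclideanSpace ℝ (Fin n)) (r : ℝ), 0 < r →
        ((∫⁻ x in ball c r, (w x)⁻¹ * w x) / (∫⁻ x in ball c r, w x)) *
          (((∫⁻ x in ball c r, ((w x)⁻¹) ^ (-(1/(p-1))) * w x) /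
              (∫⁻ x in ball c r, w x)) ^ (p - 1)) ≤ C)
    ↔
    (∃ C : ℝ≥0, ∀ (c : EuclideanSpace ℝ (Fin n)) (r : ℝ), 0 < r →
        ((∫⁻ x in ball c r, (w x) ^ (p/(p-1))) / volume (ball c r)) ^ ((p-1)/p)
          ≤ C * ((∫⁻ x in ball c r, w x) / volume (ball c r))) := by
  have hp' : 1 / (p - 1) + 1 = p / (p - 1) := by
    field_simp [(sub_pos.2 hp).ne']
    ring
  simp only [setLIntegral_inv_mul_self hpos,
    inv_rpow_neg_mul_self _ (one_div_nonneg.2 (sub_nonneg.2 hp.le)), hp']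
  calc
    _ ↔ ∃ C : ℝ≥0, ∀ (c : EuclideanSpace ℝ (Fin n)) (r : ℝ), 0 < r →
          volume (ball c r) * (∫⁻ x in ball c r, w x ^ (p / (p - 1))) ^ (p - 1)
            ≤ C * (∫⁻ x in ball c r, w x) ^ p :=
      exists_congr fun C => forall₃_congr fun c r hr =>
        div_mul_div_rpow_sub_one_le_iff hp.le (hloc c r hr).1.ne' (hloc c r hr).2
    _ ↔ ∃ C : ℝ≥0, ∀ (c : EuclideanSpace ℝ (Fin n)) (r : ℝ), 0 < r →
          volume (ball c r) * (∫⁻ x in ball c r, w x ^ (p / (p - 1))) ^ (p - 1)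
            ≤ (C : ℝ≥0∞) ^ p * (∫⁻ x in ball c r, w x) ^ p :=
      (exists_nnreal_rpow_iff (zero_lt_one.trans hp) (P := fun K =>
        ∀ (c : EuclideanSpace ℝ (Fin n)) (r : ℝ), 0 < r →
          volume (ball c r) * (∫⁻ x in ball c r, w x ^ (p / (p - 1))) ^ (p - 1)
            ≤ K * (∫⁻ x in ball c r, w x) ^ p)).symm
    _ ↔ _ :=
      exists_congr fun C => forall₃_congr fun c r hr =>
        (div_rpow_le_mul_div_iff hp.le (measure_ball_pos volume c hr).ne'
          measure_ball_lt_top.ne).symm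

/-- Let `w ∈ A_∞` (nondegenerate). Then `v = w⁻¹ ∈ A_p(w)` if and only if
`w ∈ RH_{p'}`, where `1 < p < ∞` and `p' = p/(p-1)`.  The `A_p(w)` condition on the left is
stated with averages with respect to the measure `dw = w dx`; the reverse Hölder condition
on the right with respect to Lebesgue measure. -/
theorem dual_Ap_iff_RH
    (n : ℕ) (w : EuclideanSpace ℝ (Fin n) → ℝ≥0∞) (p : ℝ) (hp : 1 < p)
    (hw : Measurable w)
    (hpos : ∀ᵐ x ∂(volume : Measure (EuclideanSpace ℝ (Fin n))), 0 < w x ∧ w x ≠ ∞)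
    (hloc : ∀ (c : EuclideanSpace ℝ (Fin n)) (r : ℝ), 0 < r →
      0 < (∫⁻ x in ball c r, w x) ∧ (∫⁻ x in ball c r, w x) ≠ ∞)
    (hAinf : ∃ q : ℝ, 1 ≤ q ∧ ∃ C : ℝ≥0, apBound n w q C) :
    (∃ C : ℝ≥0, ∀ (c : EuclideanSpace ℝ (Fin n)) (r : ℝ), 0 < r →
        ((∫⁻ x in ball c r, (w x)⁻¹ * w x) / (∫⁻ x in ball c r, w x)) *
          (((∫⁻ x in ball c r, ((w x)⁻¹) ^ (-(1/(p-1))) * w x) /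
              (∫⁻ x in ball c r, w x)) ^ (p - 1)) ≤ C)
    ↔
    (∃ C : ℝ≥0, ∀ (c : EuclideanSpace ℝ (Fin n)) (r : ℝ), 0 < r →
        ((∫⁻ x in ball c r, (w x) ^ (p/(p-1))) / volume (ball c r)) ^ ((p-1)/p)
          ≤ C * ((∫⁻ x in ball c r, w x) / volume (ball c r))) :=
  dual_Ap_iff_RH_general n w p hp hpos hloc
end
end

section
/- Let $w \in A_\infty$ on $\mathbb{R}^n$. Then $v = w^{-1} \in RH_s(w)$ if and only if $w \in A_{s'}$, where $1 < s < \infty$. -/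
/-!
With respect to `dw = w dx`, the `s`-th power of `w⁻¹` has integral `∫_B w^(1-s)` and `w⁻¹`
itself has integral `|B|`. Raising the reverse Hölder inequality to the power `s` and the
`A_{s'}` inequality to the power `s - 1 = 1/(s' - 1)` turns both into
`w(B)^(s-1) · ∫_B w^(1-s) ≤ K · |B|^s`, with `K = C^s` and `K = C^(s-1)` respectively,
so the constants correspond through `C ↦ C^(s')`.
-/

open MeasureTheory Metric ENNReal NNReal Set

noncomputable section

namespace ENNReal

lemma rpow_sub_one_mul_self {a : ℝ≥0∞} (ha0 : a ≠ 0) (ha : a ≠ ∞) (s : ℝ) :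
    a ^ (s - 1) * a = a ^ s := by
  conv_rhs => rw [← sub_add_cancel s 1, rpow_add _ _ ha0 ha, rpow_one]

lemma inv_rpow_mul_self {a : ℝ≥0∞} (ha0 : a ≠ 0) (ha : a ≠ ∞) (s : ℝ) :
    a⁻¹ ^ s * a = a ^ (1 - s) := by
  rw [inv_rpow, ← rpow_neg, ← rpow_sub_one_mul_self ha0 ha (1 - s), sub_sub_cancel_left]

lemma div_rpow_one_div_le_mul_div_iff {s : ℝ} (hs : 0 < s) {a v d k : ℝ≥0∞}
    (ha0 : a ≠ 0) (ha : a ≠ ∞) :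
    (d / a) ^ (1 / s) ≤ k * (v / a) ↔ a ^ (s - 1) * d ≤ k ^ s * v ^ s := by
  rw [one_div, rpow_inv_le_iff hs, mul_rpow_of_nonneg _ _ hs.le, div_rpow_of_nonneg _ _ hs.le,
    ← mul_div_assoc, ENNReal.le_div_iff_mul_le (Or.inl (rpow_pos (pos_iff_ne_zero.2 ha0) ha).ne')
      (Or.inl (rpow_ne_top_of_nonneg hs.le ha)), ← rpow_sub_one_mul_self ha0 ha s,
    mul_left_comm, ENNReal.div_mul_cancel ha0 ha, mul_comm]

lemma div_mul_div_rpow_le_iff {s : ℝ} (hs : 1 < s) {a v d m : ℝ≥0∞}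
    (hv0 : v ≠ 0) (hv : v ≠ ∞) :
    a / v * (d / v) ^ (1 / (s - 1)) ≤ m ↔ a ^ (s - 1) * d ≤ m ^ (s - 1) * v ^ s := by
  have ht : 0 < s - 1 := sub_pos.2 hs
  rw [← rpow_le_rpow_iff ht, mul_rpow_of_nonneg _ _ ht.le, ← rpow_mul, one_div,
    inv_mul_cancel₀ ht.ne', rpow_one, div_rpow_of_nonneg _ _ ht.le, ← mul_div_assoc,
    ENNReal.div_le_iff hv0 hv, ← ENNReal.mul_div_right_comm,
    ENNReal.div_le_iff (rpow_pos (pos_iff_ne_zero.2 hv0) hv).ne' (rpow_ne_top_of_nonneg ht.le hv),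
    mul_assoc, mul_comm v, rpow_sub_one_mul_self hv0 hv]

end ENNReal

lemma reverseHolder_avg_iff_muckenhoupt_avg {s : ℝ} (hs : 1 < s) {a v d k : ℝ≥0∞}
    (ha0 : a ≠ 0) (ha : a ≠ ∞) (hv0 : v ≠ 0) (hv : v ≠ ∞) :
    (d / a) ^ (1 / s) ≤ k * (v / a) ↔ a / v * (d / v) ^ (1 / (s - 1)) ≤ k ^ (s / (s - 1)) := by
  rw [div_rpow_one_div_le_mul_div_iff (by linarith) ha0 ha, div_mul_div_rpow_le_iff hs hv0 hv,
    ← ENNReal.rpow_mul, div_mul_cancel₀ _ (sub_pos.2 hs).ne']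

section

variable {α : Type*} [MeasurableSpace α] {μ : Measure α} {f : α → ℝ≥0∞}

lemma lintegral_inv_rpow_mul_self (hf : ∀ᵐ x ∂μ, f x ≠ 0 ∧ f x ≠ ∞) (s : ℝ) :
    ∫⁻ x, (f x)⁻¹ ^ s * f x ∂μ = ∫⁻ x, f x ^ (1 - s) ∂μ :=
  lintegral_congr_ae (hf.mono fun _ hx => inv_rpow_mul_self hx.1 hx.2 s)

lemma lintegral_inv_mul_self (hf : ∀ᵐ x ∂μ, f x ≠ 0 ∧ f x ≠ ∞) :
    ∫⁻ x, (f x)⁻¹ * f x ∂μ = μ univ := by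
  rw [← lintegral_one]
  exact lintegral_congr_ae (hf.mono fun _ hx => ENNReal.inv_mul_cancel hx.1 hx.2)

end

theorem dual_RH_iff_Ap_general
    (n : ℕ) (w : EuclideanSpace ℝ (Fin n) → ℝ≥0∞) (s : ℝ) (hs : 1 < s)
    (hpos : ∀ᵐ x ∂(volume : Measure (EuclideanSpace ℝ (Fin n))), 0 < w x ∧ w x ≠ ∞)
    (hloc : ∀ (c : EuclideanSpace ℝ (Fin n)) (r : ℝ), 0 < r →
      0 < (∫⁻ x in ball c r, w x) ∧ (∫⁻ x in ball c r, w x) ≠ ∞) :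
    (∃ C : ℝ≥0, ∀ (c : EuclideanSpace ℝ (Fin n)) (r : ℝ), 0 < r →
        ((∫⁻ x in ball c r, ((w x)⁻¹) ^ s * w x) / (∫⁻ x in ball c r, w x)) ^ (1/s)
          ≤ C * ((∫⁻ x in ball c r, (w x)⁻¹ * w x) / (∫⁻ x in ball c r, w x)))
    ↔
    (∃ C : ℝ≥0, ∀ (c : EuclideanSpace ℝ (Fin n)) (r : ℝ), 0 < r →
        ((∫⁻ x in ball c r, w x) / volume (ball c r)) *
          (((∫⁻ x in ball c r, (w x) ^ (-(1/(s/(s-1)-1)))) / volume (ball c r)) ^ (s/(s-1) - 1))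
          ≤ C) := by
  have ht : 0 < s - 1 := sub_pos.2 hs
  have hexp : s / (s - 1) - 1 = 1 / (s - 1) := by field_simp; ring
  have hexp' : -(1 / (1 / (s - 1))) = 1 - s := by rw [one_div_one_div, neg_sub]
  have hw : ∀ᵐ x, w x ≠ 0 ∧ w x ≠ ∞ := hpos.mono fun _ hx => ⟨hx.1.ne', hx.2⟩
  simp only [lintegral_inv_rpow_mul_self (ae_restrict_of_ae hw),
    lintegral_inv_mul_self (ae_restrict_of_ae hw), Measure.restrict_apply_univ, hexp, hexp']
  have key (c : EuclideanSpace ℝ (Fin n)) (r : ℝ) (hr : 0 < r) (k : ℝ≥0∞) :=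
    reverseHolder_avg_iff_muckenhoupt_avg hs (d := ∫⁻ x in ball c r, w x ^ (1 - s)) (k := k)
      (hloc c r hr).1.ne' (hloc c r hr).2 (measure_ball_pos volume c hr).ne' measure_ball_lt_top.ne
  constructor
  · rintro ⟨C, hC⟩
    refine ⟨C ^ (s / (s - 1)), fun c r hr => ?_⟩
    rw [coe_rpow_of_nonneg _ (by positivity)]
    exact (key c r hr C).1 (hC c r hr)
  · rintro ⟨C, hC⟩
    refine ⟨C ^ ((s - 1) / s), fun c r hr => (key c r hr _).2 ?_⟩
    have hinv : (s - 1) / s * (s / (s - 1)) = 1 := by field_simp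
    rw [coe_rpow_of_nonneg _ (by positivity), ← ENNReal.rpow_mul, hinv, ENNReal.rpow_one]
    exact hC c r hr

/-- Let `w ∈ A_∞` (nondegenerate). Then `v = w⁻¹ ∈ RH_s(w)` if and only if
`w ∈ A_{s'}`, where `1 < s < ∞` and `s' = s/(s-1)`.  The `RH_s(w)` condition on the left is
stated with averages with respect to the measure `dw = w dx`; the Muckenhoupt condition
on the right with respect to Lebesgue measure. -/
theorem dual_RH_iff_Ap
    (n : ℕ) (w : EuclideanSpace ℝ (Fin n) → ℝ≥0∞) (s : ℝ) (hs : 1 < s)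
    (hw : Measurable w)
    (hpos : ∀ᵐ x ∂(volume : Measure (EuclideanSpace ℝ (Fin n))), 0 < w x ∧ w x ≠ ∞)
    (hloc : ∀ (c : EuclideanSpace ℝ (Fin n)) (r : ℝ), 0 < r →
      0 < (∫⁻ x in ball c r, w x) ∧ (∫⁻ x in ball c r, w x) ≠ ∞)
    (hAinf : ∃ q : ℝ, 1 ≤ q ∧ ∃ C : ℝ≥0, apBound n w q C) :
    (∃ C : ℝ≥0, ∀ (c : EuclideanSpace ℝ (Fin n)) (r : ℝ), 0 < r →
        ((∫⁻ x in ball c r, ((w x)⁻¹) ^ s * w x) / (∫⁻ x in ball c r, w x)) ^ (1/s)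
          ≤ C * ((∫⁻ x in ball c r, (w x)⁻¹ * w x) / (∫⁻ x in ball c r, w x)))
    ↔
    (∃ C : ℝ≥0, ∀ (c : EuclideanSpace ℝ (Fin n)) (r : ℝ), 0 < r →
        ((∫⁻ x in ball c r, w x) / volume (ball c r)) *
          (((∫⁻ x in ball c r, (w x) ^ (-(1/(s/(s-1)-1)))) / volume (ball c r)) ^ (s/(s-1) - 1))
          ≤ C) :=
  dual_RH_iff_Ap_general n w s hs hpos hloc
end
end

section
/- For each fixed $t > 0$ and $r_i > 0$ and integer $M \ge 1$, the function $\phi(z,t) = e^{-t^2 z}(1 - e^{-r_i^2 z})^M$, holomorphic on the sector $\Sigma_\mu = \{z \in \mathbb{C}\setminus\{0\} : |\arg z| < \mu\}$ for $0 < \mu < \pi/2$, admits the representation $\phi(L, t) = \int_\Gamma e^{-zL}\eta(z,t)\,dz$ with $\eta(z,t) = \int_\gamma e^{\zeta z}\phi(\zeta, t)\,d\zeta$, where $\Gamma = \partial\Sigma_{\pi/2 - \theta}$ and $\gamma = \mathbb{R}_+ e^{i\,\mathrm{sign}(\mathrm{Im}\,z)\,\nu}$ for $0 < \theta < \nu <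 \mu$; moreover, for every $z \in \Gamma$, $|\eta(z,t)| \le C\, r_i^{2M}/(|z| + t^2)^{M+1}$, with $C$ independent of $t$ and $r_i$. -/
/-!
On the ray `γ` write `ζ = s E` with `E = exp (i σ ν)`, `σ = sign (Im z)`. For `z ∈ Γ` the angle
between `E` and `z` is `π/2 + (ν - θ)`, so `|exp (ζ z)| = exp (-s |z| sin (ν - θ))`, while
`|exp (-t² ζ)| = exp (-s t² cos ν)`; and `|1 - exp (-r² ζ)| ≤ r² s` by the mean value theorem,
since `exp ∘ neg` is `1`-Lipschitz on the right half-plane. The integrand is thus dominated by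
`r^{2M} s^M exp (-c s)` with
`c = |z| sin (ν - θ) + t² cos ν ≥ min (sin (ν - θ)) (cos ν) (|z| + t²)`, and
`∫₀^∞ s^M exp (-c s) ds = M! / c^{M+1}`.
-/

open MeasureTheory Set

noncomputable section

/-- The kernel `η(z,t) = ∫_γ e^{ζ z} φ(ζ,t) dζ`, where `φ(ζ,t) = e^{-t²ζ}(1-e^{-r²ζ})^M`
and `γ = ℝ₊ e^{i sign(Im z) ν}`, parametrized by arc length `s ↦ s e^{i sign(Im z) ν}`. -/
def etaKernel (M : ℕ) (ν t ri : ℝ) (z : ℂ) : ℂ :=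
  ∫ s in Ioi (0:ℝ),
    Complex.exp ((s : ℂ) * Complex.exp (((if 0 ≤ z.im then (1:ℝ) else -1) * ν : ℝ) * Complex.I) * z) *
      (Complex.exp (-((t^2 : ℝ) : ℂ) *
          ((s : ℂ) * Complex.exp (((if 0 ≤ z.im then (1:ℝ) else -1) * ν : ℝ) * Complex.I))) *
        (1 - Complex.exp (-((ri^2 : ℝ) : ℂ) *
          ((s : ℂ) * Complex.exp (((if 0 ≤ z.im then (1:ℝ) else -1) * ν : ℝ) * Complex.I)))) ^ M *
        Complex.exp (((if 0 ≤ z.im then (1:ℝ) else -1) * ν : ℝ) * Complex.I))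

open Real
open scoped Nat

lemma Complex.norm_one_sub_exp_neg_le {w : ℂ} (hw : 0 ≤ w.re) : ‖1 - Complex.exp (-w)‖ ≤ ‖w‖ := by
  have hderiv : ∀ x ∈ {x : ℂ | 0 ≤ x.re},
      HasDerivWithinAt (fun x ↦ Complex.exp (-x)) (-Complex.exp (-x)) {x : ℂ | 0 ≤ x.re} x :=
    fun x _ ↦ by simpa using ((hasDerivAt_neg x).cexp).hasDerivWithinAt
  have hbound : ∀ x ∈ {x : ℂ | 0 ≤ x.re}, ‖-Complex.exp (-x)‖ ≤ 1 := fun x hx ↦ by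
    simpa [Complex.norm_exp] using hx
  simpa [norm_sub_rev] using
    (convex_halfSpace_re_ge 0).norm_image_sub_le_of_norm_hasDerivWithin_le hderiv hbound
      (by simp : (0 : ℂ) ∈ {x : ℂ | 0 ≤ x.re}) hw

lemma integral_pow_mul_exp_neg_mul_Ioi (k : ℕ) {c : ℝ} (hc : 0 < c) :
    ∫ x in Ioi (0 : ℝ), x ^ k * rexp (-(c * x)) = k ! / c ^ (k + 1) := by
  have key := integral_rpow_mul_exp_neg_mul_Ioi (by positivity : (0 : ℝ) < k + 1) hc
  simp_rw [add_sub_cancel_right, rpow_natCast] at key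
  rw [key, Gamma_nat_eq_factorial, one_div, inv_rpow hc.le, ← Nat.cast_succ, rpow_natCast]
  field_simp

lemma integrableOn_pow_mul_exp_neg_mul_Ioi (k : ℕ) {c : ℝ} (hc : 0 < c) :
    IntegrableOn (fun x : ℝ ↦ x ^ k * rexp (-(c * x))) (Ioi 0) :=
  .of_integral_ne_zero (by rw [integral_pow_mul_exp_neg_mul_Ioi k hc]; positivity)

lemma norm_setIntegral_Ioi_le_of_norm_le_pow_mul_exp {E : Type*} [NormedAddCommGroup E]
    [NormedSpace ℝ E] {f : ℝ → E} (k : ℕ) {A c : ℝ} (hc : 0 < c)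
    (hf : ∀ s ∈ Ioi (0 : ℝ), ‖f s‖ ≤ A * (s ^ k * rexp (-(c * s)))) :
    ‖∫ s in Ioi (0 : ℝ), f s‖ ≤ A * (k ! / c ^ (k + 1)) := by
  calc ‖∫ s in Ioi (0 : ℝ), f s‖ ≤ ∫ s in Ioi (0 : ℝ), A * (s ^ k * rexp (-(c * s))) :=
        norm_integral_le_of_norm_le ((integrableOn_pow_mul_exp_neg_mul_Ioi k hc).const_mul A)
          ((ae_restrict_iff' measurableSet_Ioi).mpr (.of_forall hf))
    _ = A * (k ! / c ^ (k + 1)) := by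
        rw [integral_const_mul, integral_pow_mul_exp_neg_mul_Ioi k hc]

lemma Complex.re_exp_ofReal_mul_I_mul (x : ℝ) (z : ℂ) :
    (Complex.exp (x * Complex.I) * z).re = ‖z‖ * Real.cos (z.arg + x) := by
  have hpolar :
      Complex.exp (x * Complex.I) * z = ‖z‖ * Complex.exp ((z.arg + x : ℝ) * Complex.I) := by
    conv_lhs => rw [← Complex.norm_mul_exp_arg_mul_I z]
    push_cast
    rw [add_mul, Complex.exp_add]
    ring
  rw [hpolar, Complex.re_ofReal_mul, Complex.exp_ofReal_mul_I_re]

def contourDirection (ν : ℝ) (z : ℂ) : ℂ :=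
  Complex.exp (((if 0 ≤ z.im then (1:ℝ) else -1) * ν : ℝ) * Complex.I)

def etaIntegrand (M : ℕ) (t ri : ℝ) (E z : ℂ) (s : ℝ) : ℂ :=
  Complex.exp ((s : ℂ) * E * z) *
    (Complex.exp (-((t^2 : ℝ) : ℂ) * ((s : ℂ) * E)) *
      (1 - Complex.exp (-((ri^2 : ℝ) : ℂ) * ((s : ℂ) * E))) ^ M * E)

lemma etaKernel_eq_integral_etaIntegrand (M : ℕ) (ν t ri : ℝ) (z : ℂ) :
    etaKernel M ν t ri z = ∫ s in Ioi (0 : ℝ), etaIntegrand M t ri (contourDirection ν z) z s :=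
  rfl

lemma norm_contourDirection (ν : ℝ) (z : ℂ) : ‖contourDirection ν z‖ = 1 :=
  Complex.norm_exp_ofReal_mul_I _

lemma re_contourDirection (ν : ℝ) (z : ℂ) : (contourDirection ν z).re = Real.cos ν := by
  rw [contourDirection, Complex.exp_ofReal_mul_I_re]
  split_ifs <;> simp

lemma re_contourDirection_mul (ν : ℝ) (z : ℂ) :
    (contourDirection ν z * z).re = ‖z‖ * Real.cos (|z.arg| + ν) := by
  rw [contourDirection, Complex.re_exp_ofReal_mul_I_mul]
  split_ifs with h
  · rw [abs_of_nonneg (Complex.arg_nonneg_iff.mpr h), one_mul]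
  · rw [abs_of_neg (Complex.arg_neg_iff.mpr (not_le.mp h)), ← Real.cos_neg]
    ring_nf

lemma norm_etaIntegrand_le (M : ℕ) (t ri : ℝ) {E : ℂ} (z : ℂ) (hE : ‖E‖ = 1) (hE₀ : 0 ≤ E.re)
    {s : ℝ} (hs : 0 ≤ s) :
    ‖etaIntegrand M t ri E z s‖ ≤
      ri ^ (2 * M) * (s ^ M * rexp (-((t ^ 2 * E.re - (E * z).re) * s))) := by
  have hz_factor : ‖Complex.exp (s * E * z)‖ = rexp (s * (E * z).re) := by
    rw [Complex.norm_exp, mul_assoc, Complex.re_ofReal_mul]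
  have ht_factor : ‖Complex.exp (-((t ^ 2 : ℝ) : ℂ) * (s * E))‖ = rexp (-(t ^ 2 * s * E.re)) := by
    rw [Complex.norm_exp, ← mul_assoc, ← Complex.ofReal_neg, ← Complex.ofReal_mul,
      Complex.re_ofReal_mul]
    ring_nf
  have hw : 0 ≤ (((ri ^ 2 : ℝ) : ℂ) * (s * E)).re := by
    rw [← mul_assoc, ← Complex.ofReal_mul, Complex.re_ofReal_mul]
    positivity
  have hri_factor : ‖(1 - Complex.exp (-((ri ^ 2 : ℝ) : ℂ) * (s * E))) ^ M‖ ≤ (ri ^ 2 * s) ^ M := by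
    rw [norm_pow, neg_mul]
    gcongr
    refine (Complex.norm_one_sub_exp_neg_le hw).trans_eq ?_
    simp [hE, abs_of_nonneg hs]
  have hexp_add : rexp (s * (E * z).re) * rexp (-(t ^ 2 * s * E.re)) =
      rexp (-((t ^ 2 * E.re - (E * z).re) * s)) := by
    rw [← Real.exp_add]
    ring_nf
  calc ‖etaIntegrand M t ri E z s‖
      = rexp (s * (E * z).re) * (rexp (-(t ^ 2 * s * E.re)) *
          ‖(1 - Complex.exp (-((ri ^ 2 : ℝ) : ℂ) * (s * E))) ^ M‖) := by
        rw [etaIntegrand, norm_mul, norm_mul, norm_mul, hz_factor, ht_factor, hE, mul_one]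
    _ ≤ rexp (s * (E * z).re) * (rexp (-(t ^ 2 * s * E.re)) * (ri ^ 2 * s) ^ M) := by
        gcongr
    _ = ri ^ (2 * M) * (s ^ M * rexp (-((t ^ 2 * E.re - (E * z).re) * s))) := by
        rw [← hexp_add, mul_pow, ← pow_mul]
        ring

theorem eta_kernel_bound_general (M : ℕ) (θ ν μ : ℝ)
    (h1 : 0 < θ) (h2 : θ < ν) (h3 : ν < μ) (h4 : μ < Real.pi / 2) :
    ∃ C : ℝ, 0 ≤ C ∧ ∀ (t ri : ℝ), 0 < t → 0 < ri →
      ∀ z : ℂ, z ≠ 0 → |Complex.arg z| = Real.pi / 2 - θ →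
      ‖etaKernel M ν t ri z‖ ≤ C * ri ^ (2 * M) / (‖z‖ + t ^ 2) ^ (M + 1) := by
  have hsin : 0 < Real.sin (ν - θ) := Real.sin_pos_of_pos_of_lt_pi (by linarith) (by linarith)
  have hcos : 0 < Real.cos ν := Real.cos_pos_of_mem_Ioo ⟨by linarith, by linarith⟩
  set δ := min (Real.sin (ν - θ)) (Real.cos ν)
  refine ⟨M ! / δ ^ (M + 1), by positivity, fun t ri _ _ z _ harg ↦ ?_⟩
  set E := contourDirection ν z
  set c := t ^ 2 * E.re - (E * z).re
  have hc : δ * (‖z‖ + t ^ 2) ≤ c := by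
    have hcos_add : Real.cos (Real.pi / 2 - θ + ν) = -Real.sin (ν - θ) := by
      rw [show Real.pi / 2 - θ + ν = ν - θ + Real.pi / 2 by ring, Real.cos_add_pi_div_two]
    simp only [c, E, re_contourDirection, re_contourDirection_mul, harg, hcos_add]
    nlinarith [min_le_left (Real.sin (ν - θ)) (Real.cos ν),
      min_le_right (Real.sin (ν - θ)) (Real.cos ν), norm_nonneg z, sq_nonneg t]
  have hc₀ : 0 < c := lt_of_lt_of_le (by positivity) hc
  rw [etaKernel_eq_integral_etaIntegrand]
  calc ‖∫ s in Ioi (0 : ℝ), etaIntegrand M t ri E z s‖ ≤ ri ^ (2 * M) * (M ! / c ^ (M + 1)) :=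
        norm_setIntegral_Ioi_le_of_norm_le_pow_mul_exp M hc₀ fun s hs ↦
          norm_etaIntegrand_le M t ri z (norm_contourDirection ν z)
            (re_contourDirection ν z ▸ hcos.le) (le_of_lt hs)
    _ ≤ ri ^ (2 * M) * (M ! / (δ * (‖z‖ + t ^ 2)) ^ (M + 1)) := by gcongr
    _ = M ! / δ ^ (M + 1) * ri ^ (2 * M) / (‖z‖ + t ^ 2) ^ (M + 1) := by
        rw [mul_pow]
        field_simp

/-- for `0 < θ < ν < μ < π/2` and `M ≥ 1`, there is a constant `C`,
independent of `t > 0` and `r_i > 0`, such that for every `z` on the boundary contour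
`Γ = ∂Σ_{π/2-θ}` (i.e. `z ≠ 0` with `|arg z| = π/2 - θ`),
`|η(z,t)| ≤ C r_i^{2M} / (|z| + t²)^{M+1}`. -/
theorem eta_kernel_bound (M : ℕ) (hM : 1 ≤ M) (θ ν μ : ℝ)
    (h1 : 0 < θ) (h2 : θ < ν) (h3 : ν < μ) (h4 : μ < Real.pi / 2) :
    ∃ C : ℝ, 0 ≤ C ∧ ∀ (t ri : ℝ), 0 < t → 0 < ri →
      ∀ z : ℂ, z ≠ 0 → |Complex.arg z| = Real.pi / 2 - θ →
      ‖etaKernel M ν t ri z‖ ≤ C * ri ^ (2 * M) / (‖z‖ + t ^ 2) ^ (M + 1) :=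
  eta_kernel_bound_general M θ ν μ h1 h2 h3 h4
end
end
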